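/- With a_n = (2 log n)^{-1/2} and b_n = (2 log n)^{1/2} - (log log n + log 4π)/(2(2 log n)^{1/2}), for each fixed x ∈ ℝ one has n(1 - Φ(a_n x + b_n)) → e^{-x} as n → ∞. -/

import Mathlib

/-!
Mills' bounds `(1 - u⁻²) φ(u) / u ≤ 1 - Φ(u) ≤ φ(u) / u` for `u > 0` give
`1 - Φ(u) ~ φ(u) / u`. Put `s = √(2 log n)`, so that `n = e^{s²/2}` and `a_n x + b_n = s + q` with
`q = (x - log (√(2π) s)) / s → 0`. Since `φ(s + q) = φ(s) e^{-sq - q²/2}` and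
`e^{s²/2} φ(s) = 1 / √(2π)`, one gets `n φ(s + q) = e^{-x} s e^{-q²/2}`, hence
`n (1 - Φ(s + q)) ~ e^{-x} · s / (s + q) · e^{-q²/2} → e^{-x}`.
-/

/-- The standard normal density. -/
noncomputable def stdNormalPDF (t : ℝ) : ℝ := Real.exp (-t ^ 2 / 2) / Real.sqrt (2 * Real.pi)

/-- The standard normal cumulative distribution function. -/
noncomputable def stdNormalCDF (x : ℝ) : ℝ := ∫ t in Set.Iic x, stdNormalPDF t

open Real MeasureTheory ProbabilityTheory Filter Topology Set

lemma stdNormalPDF_eq_gaussianPDFReal : stdNormalPDF = gaussianPDFReal 0 1 := by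
  ext t
  simp [stdNormalPDF, gaussianPDFReal, div_eq_inv_mul]

lemma stdNormalPDF_pos (t : ℝ) : 0 < stdNormalPDF t := by
  unfold stdNormalPDF
  positivity

lemma integrable_stdNormalPDF : Integrable stdNormalPDF :=
  stdNormalPDF_eq_gaussianPDFReal ▸ integrable_gaussianPDFReal 0 1

lemma one_sub_stdNormalCDF_eq_integral_Ioi (u : ℝ) :
    1 - stdNormalCDF u = ∫ t in Ioi u, stdNormalPDF t := by
  have htotal : ∫ t, stdNormalPDF t = 1 := by
    rw [stdNormalPDF_eq_gaussianPDFReal]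
    exact integral_gaussianPDFReal_eq_one 0 one_ne_zero
  rw [← htotal, ← intervalIntegral.integral_Iic_add_Ioi integrable_stdNormalPDF.integrableOn
    integrable_stdNormalPDF.integrableOn, stdNormalCDF, add_sub_cancel_left]

lemma hasDerivAt_stdNormalPDF (t : ℝ) : HasDerivAt stdNormalPDF (-t * stdNormalPDF t) t := by
  have h : HasDerivAt (fun t : ℝ => -t ^ 2 / 2) (-t) t :=
    (((hasDerivAt_pow 2 t).neg).div_const 2).congr_deriv (by norm_num; ring)
  exact (h.exp.div_const (√(2 * π))).congr_deriv (by rw [stdNormalPDF]; ring)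

lemma tendsto_stdNormalPDF_atTop : Tendsto stdNormalPDF atTop (𝓝 0) := by
  have h : Tendsto (fun t : ℝ => -t ^ 2 / 2) atTop atBot := by
    simpa [neg_div] using (tendsto_pow_atTop two_ne_zero).atTop_div_const two_pos
  have h' := (tendsto_exp_atBot.comp h).div_const (√(2 * π))
  rwa [zero_div] at h'

lemma integrable_mul_stdNormalPDF : Integrable (fun t : ℝ => t * stdNormalPDF t) := by
  convert (integrable_mul_exp_neg_mul_sq (b := 1 / 2) (by norm_num)).div_const (√(2 * π))
    using 2 with t
  unfold stdNormalPDF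
  ring_nf

lemma integral_Ioi_mul_stdNormalPDF (u : ℝ) :
    ∫ t in Ioi u, t * stdNormalPDF t = stdNormalPDF u := by
  have h := integral_Ioi_of_hasDerivAt_of_tendsto' (m := 0) (a := u)
    (f := fun t => -stdNormalPDF t)
    (fun t _ => (hasDerivAt_stdNormalPDF t).neg.congr_deriv (by ring))
    integrable_mul_stdNormalPDF.integrableOn (by simpa using tendsto_stdNormalPDF_atTop.neg)
  simpa using h

lemma one_sub_stdNormalCDF_le (u : ℝ) (hu : 0 < u) :
    1 - stdNormalCDF u ≤ stdNormalPDF u / u := by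
  calc 1 - stdNormalCDF u = ∫ t in Ioi u, stdNormalPDF t := one_sub_stdNormalCDF_eq_integral_Ioi u
    _ ≤ ∫ t in Ioi u, t * stdNormalPDF t / u := by
      refine setIntegral_mono_on integrable_stdNormalPDF.integrableOn
        (integrable_mul_stdNormalPDF.div_const u).integrableOn measurableSet_Ioi fun t ht => ?_
      rw [le_div_iff₀ hu, mul_comm]
      exact mul_le_mul_of_nonneg_right (le_of_lt ht) (stdNormalPDF_pos t).le
    _ = stdNormalPDF u / u := by rw [integral_div, integral_Ioi_mul_stdNormalPDF]

lemma le_one_sub_stdNormalCDF (u : ℝ) (hu : 0 < u) :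
    stdNormalPDF u / u * (1 - u⁻¹ ^ 2) ≤ 1 - stdNormalCDF u := by
  have hderiv (t : ℝ) (ht : u ≤ t) : HasDerivAt (fun t => -((t⁻¹ - t⁻¹ ^ 3) * stdNormalPDF t))
      ((1 - 3 * t⁻¹ ^ 4) * stdNormalPDF t) t := by
    have ht0 : t ≠ 0 := (hu.trans_le ht).ne'
    have hinv := hasDerivAt_inv ht0
    refine ((hinv.sub (hinv.pow 3)).mul (hasDerivAt_stdNormalPDF t)).neg.congr_deriv ?_
    simp only [Pi.sub_apply, Pi.pow_apply, inv_pow]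
    field_simp
    ring
  have hbound : ∀ᵐ t ∂(volume.restrict (Ioi u)), ‖1 - 3 * t⁻¹ ^ 4‖ ≤ 1 + 3 * u⁻¹ ^ 4 := by
    filter_upwards [ae_restrict_mem measurableSet_Ioi] with t ht
    have h0 : 0 ≤ t⁻¹ ^ 4 := by positivity
    have h1 : t⁻¹ ^ 4 ≤ u⁻¹ ^ 4 :=
      pow_le_pow_left₀ (inv_nonneg.2 (hu.trans ht).le) (inv_anti₀ hu (le_of_lt ht)) 4
    rw [Real.norm_eq_abs, abs_le]
    constructor <;> linarith
  have hint : IntegrableOn (fun t => (1 - 3 * t⁻¹ ^ 4) * stdNormalPDF t) (Ioi u) :=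
    integrable_stdNormalPDF.integrableOn.bdd_mul (by fun_prop) hbound
  have hlim : Tendsto (fun t => -((t⁻¹ - t⁻¹ ^ 3) * stdNormalPDF t)) atTop (𝓝 0) := by
    have hinv := tendsto_inv_atTop_zero (𝕜 := ℝ)
    simpa using ((hinv.sub (hinv.pow 3)).mul tendsto_stdNormalPDF_atTop).neg
  calc stdNormalPDF u / u * (1 - u⁻¹ ^ 2)
      = ∫ t in Ioi u, (1 - 3 * t⁻¹ ^ 4) * stdNormalPDF t := by
        rw [integral_Ioi_of_hasDerivAt_of_tendsto' hderiv hint hlim]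
        field_simp
        ring
    _ ≤ ∫ t in Ioi u, stdNormalPDF t := by
        refine setIntegral_mono_on hint integrable_stdNormalPDF.integrableOn measurableSet_Ioi
          fun t ht => ?_
        have hpos := stdNormalPDF_pos t
        have : 0 ≤ 3 * t⁻¹ ^ 4 * stdNormalPDF t := by positivity
        linarith
    _ = 1 - stdNormalCDF u := (one_sub_stdNormalCDF_eq_integral_Ioi u).symm

lemma tendsto_one_sub_stdNormalCDF_mul_div_stdNormalPDF :
    Tendsto (fun u => (1 - stdNormalCDF u) * u / stdNormalPDF u) atTop (𝓝 1) := by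
  have hlower : Tendsto (fun u : ℝ => 1 - u⁻¹ ^ 2) atTop (𝓝 1) := by
    simpa using tendsto_const_nhds.sub ((tendsto_inv_atTop_zero (𝕜 := ℝ)).pow 2)
  refine tendsto_of_tendsto_of_tendsto_of_le_of_le' hlower tendsto_const_nhds ?_ ?_
  all_goals filter_upwards [eventually_gt_atTop 0] with u hu
  · rw [le_div_iff₀ (stdNormalPDF_pos u)]
    calc (1 - u⁻¹ ^ 2) * stdNormalPDF u = stdNormalPDF u / u * (1 - u⁻¹ ^ 2) * u := by
          field_simp
      _ ≤ (1 - stdNormalCDF u) * u := by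
          gcongr
          exact le_one_sub_stdNormalCDF u hu
  · rw [div_le_one (stdNormalPDF_pos u)]
    exact (le_div_iff₀ hu).1 (one_sub_stdNormalCDF_le u hu)

lemma stdNormalPDF_add (s q : ℝ) :
    stdNormalPDF (s + q) = stdNormalPDF s * exp (-(s * q) - q ^ 2 / 2) := by
  rw [stdNormalPDF, stdNormalPDF, div_mul_eq_mul_div, ← exp_add]
  ring_nf

lemma tendsto_sub_log_const_mul_div_atTop (x : ℝ) {c : ℝ} (hc : c ≠ 0) :
    Tendsto (fun s => (x - log (c * s)) / s) atTop (𝓝 0) := by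
  have hlog := isLittleO_log_id_atTop.tendsto_div_nhds_zero
  have h := (tendsto_const_nhds (x := x - log c)).div_atTop tendsto_id |>.sub hlog
  rw [sub_zero] at h
  refine h.congr' ?_
  filter_upwards [eventually_gt_atTop 0] with s hs
  rw [log_mul hc hs.ne', id]
  ring

lemma exp_mul_stdNormalPDF_add_div (x : ℝ) {s : ℝ} (hs : 0 < s) :
    exp (s ^ 2 / 2) * stdNormalPDF (s + (x - log (√(2 * π) * s)) / s)
      = exp (-x) * s * exp (-((x - log (√(2 * π) * s)) / s) ^ 2 / 2) := by
  set q := (x - log (√(2 * π) * s)) / s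
  have hsq : s * q = x - log (√(2 * π) * s) := mul_div_cancel₀ _ hs.ne'
  have hpdf : exp (s ^ 2 / 2) * stdNormalPDF s = 1 / √(2 * π) := by
    rw [stdNormalPDF, mul_div_assoc', ← exp_add, neg_div, add_neg_cancel, exp_zero]
  rw [stdNormalPDF_add, ← mul_assoc, hpdf, hsq, show -(x - log (√(2 * π) * s)) - q ^ 2 / 2
    = -x + log (√(2 * π) * s) + -q ^ 2 / 2 by ring, exp_add, exp_add, exp_log (by positivity)]
  field_simp

lemma tendsto_exp_mul_one_sub_stdNormalCDF_add_div (x : ℝ) :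
    Tendsto (fun s => exp (s ^ 2 / 2) * (1 - stdNormalCDF (s + (x - log (√(2 * π) * s)) / s)))
      atTop (𝓝 (exp (-x))) := by
  set q : ℝ → ℝ := fun s => (x - log (√(2 * π) * s)) / s
  show Tendsto (fun s => exp (s ^ 2 / 2) * (1 - stdNormalCDF (s + q s))) atTop _
  have hq : Tendsto q atTop (𝓝 0) := tendsto_sub_log_const_mul_div_atTop x (by positivity)
  have hu : Tendsto (fun s => s + q s) atTop atTop := tendsto_id.atTop_add hq
  have hsu : Tendsto (fun s => s / (s + q s)) atTop (𝓝 1) := by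
    have h := tendsto_const_nhds (x := (1 : ℝ)) |>.sub (hq.div_atTop hu)
    rw [sub_zero] at h
    refine h.congr' ?_
    filter_upwards [hu.eventually_gt_atTop 0] with s hs
    field_simp
    ring
  have hgauss : Tendsto (fun s => exp (-q s ^ 2 / 2)) atTop (𝓝 1) := by
    simpa using ((hq.pow 2).neg.div_const 2).rexp
  have hlim := (tendsto_one_sub_stdNormalCDF_mul_div_stdNormalPDF.comp hu).mul
    ((tendsto_const_nhds (x := exp (-x))).mul hsu |>.mul hgauss)
  rw [one_mul, mul_one, mul_one] at hlim
  refine hlim.congr' ?_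
  filter_upwards [eventually_gt_atTop 0, hu.eventually_gt_atTop 0] with s hs hsq
  have hpdf : exp (s ^ 2 / 2) * stdNormalPDF (s + q s) = exp (-x) * s * exp (-q s ^ 2 / 2) :=
    exp_mul_stdNormalPDF_add_div x hs
  have hpos := stdNormalPDF_pos (s + q s)
  clear_value q
  simp only [Function.comp_apply]
  calc _ = (1 - stdNormalCDF (s + q s)) / stdNormalPDF (s + q s)
        * (exp (-x) * s * exp (-q s ^ 2 / 2)) := by
        field_simp
    _ = _ := by
        rw [← hpdf]
        field_simp

lemma rpow_mul_add_sub_eq_sqrt_add_div (x : ℝ) {L : ℝ} (hL : 0 < L) :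
    (2 * L) ^ (-(1 / 2 : ℝ)) * x + ((2 * L) ^ ((1 : ℝ) / 2) -
        (log L + log (4 * π)) / (2 * (2 * L) ^ ((1 : ℝ) / 2)))
      = √(2 * L) + (x - log (√(2 * π) * √(2 * L))) / √(2 * L) := by
  have hlog : log (√(2 * π) * √(2 * L)) = (log L + log (4 * π)) / 2 := by
    rw [← sqrt_mul (by positivity), log_sqrt (by positivity),
      show 2 * π * (2 * L) = L * (4 * π) by ring, log_mul hL.ne' (by positivity)]
  have hs : 0 < √(2 * L) := by positivity
  rw [rpow_neg (by positivity), ← sqrt_eq_rpow, hlog]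
  field_simp
  ring

theorem gaussian_tail_normalized_limit (a b : ℕ → ℝ)
    (ha : ∀ n : ℕ, a n = (2 * Real.log n) ^ (-(1 / 2 : ℝ)))
    (hb : ∀ n : ℕ, b n = (2 * Real.log n) ^ ((1 : ℝ) / 2) -
        (Real.log (Real.log n) + Real.log (4 * Real.pi)) /
          (2 * (2 * Real.log n) ^ ((1 : ℝ) / 2)))
    (x : ℝ) :
    Filter.Tendsto (fun n : ℕ => (n : ℝ) * (1 - stdNormalCDF (a n * x + b n)))
      Filter.atTop (nhds (Real.exp (-x))) := by
  have hlog : Tendsto (fun n : ℕ => log n) atTop atTop :=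
    tendsto_log_atTop.comp tendsto_natCast_atTop_atTop
  have hs : Tendsto (fun n : ℕ => √(2 * log n)) atTop atTop :=
    tendsto_sqrt_atTop.comp (hlog.const_mul_atTop two_pos)
  refine ((tendsto_exp_mul_one_sub_stdNormalCDF_add_div x).comp hs).congr' ?_
  filter_upwards [hlog.eventually_gt_atTop 0, eventually_gt_atTop 0] with n hL hn
  rw [Function.comp_apply, sq_sqrt (by positivity), mul_div_cancel_left₀ _ two_ne_zero,
    exp_log (Nat.cast_pos.2 hn), ha, hb, rpow_mul_add_sub_eq_sqrt_add_div x hL]
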